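/- (Polynomial bound on ForNo computations.) For every term T of ForNo there exists a polynomial q over ℕ such that, for every state ω = (φ, c) and every ω' with ⟨T, ω⟩ ⇓ ω': (a) the (unique) derivation of ⟨T, ω⟩ ⇓ ω' contains at most q(N) applications of inference rules, and (b) the sum of the lengths of the stacks ω'(x) over the registers x occurring in T is at most q(N), where N is the sum of the lengths of the stacks ω(x) over the registers x occurring in T. -/

import Mathlib

set_option linter.unusedVariables false

namespace ForNo

/-- Registers. -/
abbrev Reg := ℕ
/-- Stacks of natural numbers; the head is the top. -/
abbrev Stack := List ℕ
/-- Stores map registers to stacks. -/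
abbrev Store := Reg → Stack
/-- A state is a store together with an error counter. -/
abbrev FState := Store × ℕ

/-- The store mapping every register to the empty stack. -/
def emptyStore : Store := fun _ => []

/-- Store update. -/
def upd (φ : Store) (x : Reg) (s : Stack) : Store := fun y => if y = x then s else φ y

/-- Counter-guarded push operation. -/
def pushOp (n : ℕ) : Stack × ℕ → Stack × ℕ
  | (s, 0) => (n :: s, 0)
  | (s, c + 1) => if s.head? = some n then (s, c + 1) else (s, c)

/-- Counter-guarded pop operation. -/
def popOp (n : ℕ) : Stack × ℕ → Stack × ℕ
  | (s, c) =>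
      if s.head? = some n then
        match c with
        | 0 => (s.tail, 0)
        | c + 1 => (s, c + 1)
      else (s, c + 1)

mutual
  /-- Terms of the (raw) language. -/
  inductive Term : Type where
    | skip : Term
    | push : ℕ → Reg → Term
    | pop : ℕ → Reg → Term
    | seq : Term → Term → Term
    | ifeq : Reg → ℕ → Term → Term
    | normal : List Reg → Term → Term
    | fort : Reg → Bodies → Term
    | roft : Reg → Bodies → Term
  /-- Nonempty lists of iteration bodies. -/
  inductive Bodies : Type where
    | single : Term → Bodies
    | cons : Term → Bodies → Bodies
end

/-- `ps.get i` is `P_min(i,m)` where `ps = P₀ … P_m`. -/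
def Bodies.get : Bodies → ℕ → Term
  | .single t, _ => t
  | .cons t _, 0 => t
  | .cons _ ps, i + 1 => ps.get i

mutual
  /-- Big-step operational semantics `⟨T, ω⟩ ⇓ ω'`. -/
  inductive Eval : Term → FState → FState → Prop where
    | skip : ∀ ω, Eval .skip ω ω
    | seq : ∀ {t u : Term} {ω ω' ω'' : FState},
        Eval t ω ω' → Eval u ω' ω'' → Eval (.seq t u) ω ω''
    | push : ∀ (n : ℕ) (x : Reg) (φ : Store) (c : ℕ),
        Eval (.push n x) (φ, c) (upd φ x (pushOp n (φ x, c)).1, (pushOp n (φ x, c)).2)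
    | pop : ∀ (n : ℕ) (x : Reg) (φ : Store) (c : ℕ),
        Eval (.pop n x) (φ, c) (upd φ x (popOp n (φ x, c)).1, (popOp n (φ x, c)).2)
    | ifeq_true : ∀ {x n t} {φ : Store} {c : ℕ} {ω' : FState},
        (φ x).head? = some n → Eval t (φ, c) ω' → Eval (.ifeq x n t) (φ, c) ω'
    | ifeq_false : ∀ {x n t} (φ : Store) (c : ℕ),
        (φ x).head? ≠ some n → Eval (.ifeq x n t) (φ, c) (φ, c)
    | normal : ∀ {xs t ω ω'}, Eval t ω ω' → Eval (.normal xs t) ω ω'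
    | fort : ∀ {x ps ω ω'}, EvalList (ω.1 x) ps ω ω' → Eval (.fort x ps) ω ω'
    | roft : ∀ {x ps ω ω'}, EvalList (ω.1 x).reverse ps ω ω' → Eval (.roft x ps) ω ω'
  /-- Iteration judgment `⟦s, ps, ω⟧ ⇓ ω'`. -/
  inductive EvalList : Stack → Bodies → FState → FState → Prop where
    | nil : ∀ (ps : Bodies) (ω : FState), EvalList [] ps ω ω
    | cons : ∀ {i : ℕ} {t : Stack} {ps : Bodies} {ω ω'' ω' : FState},
        Eval (ps.get i) ω ω'' → EvalList t ps ω'' ω' → EvalList (i :: t) ps ω ω'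
end

mutual
  /-- The inversion map `−(·)` on terms. -/
  def Term.inv : Term → Term
    | .skip => .skip
    | .push n x => .pop n x
    | .pop n x => .push n x
    | .seq t u => .seq u.inv t.inv
    | .ifeq x n t => .ifeq x n t.inv
    | .normal xs t => .normal xs t.inv
    | .fort x ps => .roft x ps.inv
    | .roft x ps => .fort x ps.inv
  def Bodies.inv : Bodies → Bodies
    | .single t => .single t.inv
    | .cons t ps => .cons t.inv ps.inv
end

mutual
  /-- `t.Writes y` holds iff some `PUSH`/`POP` occurring in `t` writes register `y`. -/
  def Term.Writes : Term → Reg → Prop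
    | .skip, _ => False
    | .push _ x, y => x = y
    | .pop _ x, y => x = y
    | .seq t u, y => t.Writes y ∨ u.Writes y
    | .ifeq _ _ t, y => t.Writes y
    | .normal _ t, y => t.Writes y
    | .fort _ ps, y => ps.Writes y
    | .roft _ ps, y => ps.Writes y
  def Bodies.Writes : Bodies → Reg → Prop
    | .single t, y => t.Writes y
    | .cons t ps, y => t.Writes y ∨ ps.Writes y
end

mutual
  /-- `t.Leads y` holds iff `y` leads some `FOR`/`ROF` iteration occurring in `t`. -/
  def Term.Leads : Term → Reg → Prop
    | .skip, _ => False
    | .push _ _, _ => False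
    | .pop _ _, _ => False
    | .seq t u, y => t.Leads y ∨ u.Leads y
    | .ifeq _ _ t, y => t.Leads y
    | .normal _ t, y => t.Leads y
    | .fort x ps, y => x = y ∨ ps.Leads y
    | .roft x ps, y => x = y ∨ ps.Leads y
  def Bodies.Leads : Bodies → Reg → Prop
    | .single t, y => t.Leads y
    | .cons t ps, y => t.Leads y ∨ ps.Leads y
end

mutual
  /-- `t.Mentions y` holds iff register `y` occurs in `t`. -/
  def Term.Mentions : Term → Reg → Prop
    | .skip, _ => False
    | .push _ x, y => x = y
    | .pop _ x, y => x = y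
    | .seq t u, y => t.Mentions y ∨ u.Mentions y
    | .ifeq x _ t, y => x = y ∨ t.Mentions y
    | .normal xs t, y => y ∈ xs ∨ t.Mentions y
    | .fort x ps, y => x = y ∨ ps.Mentions y
    | .roft x ps, y => x = y ∨ ps.Mentions y
  def Bodies.Mentions : Bodies → Reg → Prop
    | .single t, y => t.Mentions y
    | .cons t ps, y => t.Mentions y ∨ ps.Mentions y
end

mutual
  /-- The finite set of registers occurring in a term. -/
  def Term.regs : Term → Finset Reg
    | .skip => ∅
    | .push _ x => {x}
    | .pop _ x => {x}
    | .seq t u => t.regs ∪ u.regs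
    | .ifeq x _ t => insert x t.regs
    | .normal xs t => xs.toFinset ∪ t.regs
    | .fort x ps => insert x ps.regs
    | .roft x ps => insert x ps.regs
  def Bodies.regs : Bodies → Finset Reg
    | .single t => t.regs
    | .cons t ps => t.regs ∪ ps.regs
end

mutual
  /-- Safe terms: generated by the grammar `S` (no `NORMAL`). -/
  def Term.Safe : Term → Prop
    | .skip => True
    | .push _ _ => True
    | .pop _ _ => True
    | .seq t u => t.Safe ∧ u.Safe
    | .ifeq _ _ t => t.Safe
    | .normal _ _ => False
    | .fort _ ps => ps.Safe
    | .roft _ ps => ps.Safe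
  def Bodies.Safe : Bodies → Prop
    | .single t => t.Safe
    | .cons t ps => t.Safe ∧ ps.Safe
end

/-- Raw terms: generated by the grammar `T` (iterations only inside `NORMAL` bodies,
which must be safe). -/
def Term.Raw : Term → Prop
  | .skip => True
  | .push _ _ => True
  | .pop _ _ => True
  | .seq t u => t.Raw ∧ u.Raw
  | .ifeq _ _ t => t.Raw
  | .normal _ t => t.Safe
  | .fort _ _ => False
  | .roft _ _ => False

mutual
  /-- The read-only constraints (i) and (ii) defining membership in ForNo. -/
  def Term.WF : Term → Prop
    | .skip => True
    | .push _ _ => True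
    | .pop _ _ => True
    | .seq t u => t.WF ∧ u.WF
    | .ifeq x _ t => t.WF ∧ ¬ t.Writes x
    | .normal xs t => t.WF ∧ (∀ x ∈ xs, ¬ t.Writes x) ∧ (∀ y, t.Leads y → y ∈ xs)
    | .fort x ps => ps.WF ∧ ¬ ps.Writes x
    | .roft x ps => ps.WF ∧ ¬ ps.Writes x
  def Bodies.WF : Bodies → Prop
    | .single t => t.WF
    | .cons t ps => t.WF ∧ ps.WF
end

/-- A raw term is in ForNo if it satisfies the read-only constraints. -/
def InForNo (t : Term) : Prop := t.Raw ∧ t.WF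

/-- `iterSeq t k` is the `k`-fold sequential composition `t;…;t` (`SKIP` for `k = 0`). -/
def iterSeq (t : Term) : ℕ → Term
  | 0 => .skip
  | 1 => t
  | n + 2 => .seq t (iterSeq t (n + 1))

/-- `mkBodiesAux g i k` is the list of bodies `g i, g (i+1), …, g (i+k)`. -/
def mkBodiesAux (g : ℕ → Term) : ℕ → ℕ → Bodies
  | i, 0 => .single (g i)
  | i, k + 1 => .cons (g i) (mkBodiesAux g (i + 1) k)

/-- `mkBodies g k` is the list of bodies `g 0, g 1, …, g k`. -/
def mkBodies (g : ℕ → Term) (k : ℕ) : Bodies := mkBodiesAux g 0 k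

/-- `COPY(x,y)` with bodies `PUSH[0] y, …, PUSH[k] y`. -/
def COPY (x y : Reg) (k : ℕ) : Term :=
  .normal [x] (.roft x (mkBodies (fun i => .push i y) k))

/-- `n` nested `FOR rgt` iterations around `PUSH[1] p`. -/
def powNest (rgt p : Reg) : ℕ → Term
  | 0 => .push 1 p
  | n + 1 => .fort rgt (.single (powNest rgt p n))

/-- The term `POW^n`. -/
def POW (rgt p : Reg) (n : ℕ) : Term := .normal [rgt] (powNest rgt p n)

/-- The term `REMOVE-BLANKS` for tape alphabet codes `{0,…,n−1}` and
input alphabet codes `{0,…,m−1}`. -/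
def REMOVEBLANKS (rgt g1 : Reg) (n m : ℕ) : Term :=
  .seq (.normal [rgt] (.roft rgt (mkBodies (fun i => .push i g1) (n - 1))))
       (.normal [g1]
         (.seq (.fort g1 (mkBodies (fun i => .pop i rgt) (n - 1)))
               (.roft g1 (mkBodies (fun i => if i < m then .push i rgt else .skip) m))))

mutual
  /-- Big-step semantics instrumented with the number of rule applications
  in the derivation. -/
  inductive EvalN : ℕ → Term → FState → FState → Prop where
    | skip : ∀ ω, EvalN 1 .skip ω ω
    | seq : ∀ {k l : ℕ} {t u : Term} {ω ω' ω'' : FState},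
        EvalN k t ω ω' → EvalN l u ω' ω'' → EvalN (k + l + 1) (.seq t u) ω ω''
    | push : ∀ (n : ℕ) (x : Reg) (φ : Store) (c : ℕ),
        EvalN 1 (.push n x) (φ, c) (upd φ x (pushOp n (φ x, c)).1, (pushOp n (φ x, c)).2)
    | pop : ∀ (n : ℕ) (x : Reg) (φ : Store) (c : ℕ),
        EvalN 1 (.pop n x) (φ, c) (upd φ x (popOp n (φ x, c)).1, (popOp n (φ x, c)).2)
    | ifeq_true : ∀ {k x n t} {φ : Store} {c : ℕ} {ω' : FState},
        (φ x).head? = some n → EvalN k t (φ, c) ω' → EvalN (k + 1) (.ifeq x n t) (φ, c) ω'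
    | ifeq_false : ∀ {x n t} (φ : Store) (c : ℕ),
        (φ x).head? ≠ some n → EvalN 1 (.ifeq x n t) (φ, c) (φ, c)
    | normal : ∀ {k xs t ω ω'}, EvalN k t ω ω' → EvalN (k + 1) (.normal xs t) ω ω'
    | fort : ∀ {k x ps ω ω'}, EvalListN k (ω.1 x) ps ω ω' → EvalN (k + 1) (.fort x ps) ω ω'
    | roft : ∀ {k x ps ω ω'}, EvalListN k (ω.1 x).reverse ps ω ω' → EvalN (k + 1) (.roft x ps) ω ω'
  inductive EvalListN : ℕ → Stack → Bodies → FState → FState → Prop where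
    | nil : ∀ (ps : Bodies) (ω : FState), EvalListN 1 [] ps ω ω
    | cons : ∀ {k l : ℕ} {i : ℕ} {t : Stack} {ps : Bodies} {ω ω'' ω' : FState},
        EvalN k (ps.get i) ω ω'' → EvalListN l t ps ω'' ω' →
        EvalListN (k + l + 1) (i :: t) ps ω ω'
end

/-! ### Turing machines -/

/-- Deterministic one-tape Turing machines with a semi-infinite tape, input/output
alphabet `S` embedded in the tape alphabet `Γ`, and direction `Bool`
(`false` = left, `true` = right). -/
structure TM (S : Type) where
  Q : Type
  finQ : Fintype Q
  q0 : Q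
  qhalt : Q
  Γ : Type
  finΓ : Fintype Γ
  decΓ : DecidableEq Γ
  blank : Γ
  embed : S → Γ
  embed_inj : Function.Injective embed
  blank_notin : ∀ a, embed a ≠ blank
  δ : Q → Γ → Q × Γ × Bool

namespace TM

variable {S : Type}

/-- Configurations `(u, q, v)`: left tape part (nearest cell first), current state,
right tape part starting with the scanned cell (no trailing blanks). -/
abbrev Config (M : TM S) : Type := List M.Γ × M.Q × List M.Γ

/-- Remove the trailing blanks of a list. -/
def trim (M : TM S) (l : List M.Γ) : List M.Γ :=
  letI := M.decΓ
  (l.reverse.dropWhile (fun a => decide (a = M.blank))).reverse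

/-- The single-step transition function. -/
def stepFn (M : TM S) (c : M.Config) : M.Config :=
  let u := c.1
  let q := c.2.1
  let v := c.2.2
  let a := v.headD M.blank
  let r := M.δ q a
  if r.2.2 then (r.2.1 :: u, r.1, v.tail)
  else (u.tail, r.1, M.trim (u.headD M.blank :: r.2.1 :: v.tail))

/-- Single-step transition relation `c ⇝ c'`. -/
def Step (M : TM S) (c c' : M.Config) : Prop := c.2.1 ≠ M.qhalt ∧ c' = M.stepFn c

/-- `n`-step transition relation `c ⇝ⁿ c'`. -/
def Steps (M : TM S) : ℕ → M.Config → M.Config → Prop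
  | 0 => fun c c' => c = c'
  | n + 1 => fun c c'' => ∃ c', M.Step c c' ∧ M.Steps n c' c''

/-- The initial configuration on input `w`. -/
def init (M : TM S) (w : List S) : M.Config := ([], M.q0, w.map M.embed)

/-- `M` is a polynomial-time Turing machine. -/
def PTime (M : TM S) : Prop :=
  ∃ a b : ℕ, 0 < a ∧ 0 < b ∧ ∀ w : List S,
    ∃ k ≤ a * w.length ^ b, ∃ c : M.Config, M.Steps k (M.init w) c ∧ c.2.1 = M.qhalt

end TM

/-- `f` is computable in polynomial time. -/
def FPTime {S : Type} (f : List S → List S) : Prop :=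
  ∃ M : TM S, M.PTime ∧
    ∀ w : List S, ∃ k : ℕ, M.Steps k (M.init w) ([], M.qhalt, (f w).map M.embed)

/-- `f` is honest: the input length is polynomially bounded in the output length. -/
def Honest {S : Type} (f : List S → List S) : Prop :=
  ∃ q : Polynomial ℕ, ∀ x : List S, x.length ≤ q.eval (f x).length

/-! ### Encodings and computed functions -/

/-- An encoding of a finite alphabet `S`: a bijection onto `{0, …, |S| − 1}`. -/
structure Encoding (S : Type) [Fintype S] where
  enc : S → ℕ
  inj : Function.Injective enc
  lt : ∀ a, enc a < Fintype.card S

/-- Encoding of strings as stacks. -/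
def Encoding.encStr {S : Type} [Fintype S] (e : Encoding S) (w : List S) : Stack :=
  w.map e.enc

/-- `T` (with input register `rin` and output register `rout`) computes `f`. -/
def Computes {S : Type} [Fintype S] (e : Encoding S) (T : Term) (rin rout : Reg)
    (f : List S → List S) : Prop :=
  ∀ x : List S, ∃ φ : Store,
    Eval T (upd emptyStore rin (e.encStr x), 0) (φ, 0) ∧ φ rout = e.encStr (f x)

/-- `T` computes `f` with zero-garbage. -/
def ComputesZG {S : Type} [Fintype S] (e : Encoding S) (T : Term) (rin rout : Reg)
    (f : List S → List S) : Prop :=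
  ∀ x : List S, ∃ φ : Store,
    Eval T (upd emptyStore rin (e.encStr x), 0) (φ, 0) ∧ φ rout = e.encStr (f x) ∧
    ∀ y : Reg, y ≠ rout → φ y = []

/-! ### Simulation of Turing machines -/

/-- The register holding the left part of the tape. -/
def lftR : Reg := 0
/-- The register holding the current state. -/
def qR : Reg := 1
/-- The register holding the right part of the tape. -/
def rgtR : Reg := 2

/-- `σ` simulates configuration `c` (written `σ ≈ c`). -/
def Sim {S : Type} (M : TM S) (encΓ : M.Γ → ℕ) (encQ : M.Q → ℕ)
    (σ : FState) (c : M.Config) : Prop :=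
  σ.2 = 0 ∧
  σ.1 lftR = c.1.map encΓ ∧
  (σ.1 qR).head? = some (encQ c.2.1) ∧
  ∃ bs : Stack, (∀ b ∈ bs, b = encΓ M.blank) ∧ σ.1 rgtR = c.2.2.map encΓ ++ bs

/-- `σ` cleanly simulates configuration `c` (written `σ ≅ c`). -/
def SimClean {S : Type} (M : TM S) (encΓ : M.Γ → ℕ) (encQ : M.Q → ℕ)
    (σ : FState) (c : M.Config) : Prop :=
  σ.2 = 0 ∧
  σ.1 lftR = c.1.map encΓ ∧
  (σ.1 qR).head? = some (encQ c.2.1) ∧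
  σ.1 rgtR = c.2.2.map encΓ

/-- The hypotheses of the simulation setup: `encΓ` is a bijection of `Γ` onto
`{0,…,n−1}` giving non-input characters larger codes than input characters,
and `encQ` is an injective encoding of states. -/
def SimSetup {S : Type} (M : TM S) (encΓ : M.Γ → ℕ) (encQ : M.Q → ℕ) : Prop :=
  Function.Injective encΓ ∧
  (∀ a : M.Γ, encΓ a < @Fintype.card M.Γ M.finΓ) ∧
  (∀ a : M.Γ, (∀ s : S, M.embed s ≠ a) → ∀ s : S, encΓ (M.embed s) < encΓ a) ∧
  Function.Injective encQ


/-!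
Every rule application changes the total length of the stacks by at most one, so the bound
on final stack lengths follows from a polynomial bound on derivation sizes. Inside
`NORMAL x₁,…,x_k {S}` the registers `xᵢ` are read-only and lead every iteration, so each loop
of `S` runs at most `max |xᵢ| ≤ N` times and the derivation of `S` has size bounded by a
polynomial in `N` depending only on `S`. Outside `NORMAL` there are no loops; sequencing
composes the bounds, the input size of the second term being at most `N` plus the size of the
first derivation.
-/

open Polynomial

theorem _root_.Polynomial.eval_mono_of_canonicallyOrdered {R : Type*} [CommSemiring R]
    [PartialOrder R] [CanonicallyOrderedAdd R] [IsOrderedRing R] (p : R[X]) :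
    Monotone (fun x => p.eval x) := by
  intro x y hxy
  induction p using Polynomial.induction_on' with
  | add p q hp hq => simpa only [eval_add] using add_le_add hp hq
  | monomial n a => simpa only [eval_monomial] using mul_le_mul_right (pow_le_pow_left' hxy n) a

theorem length_pushOp_le (n : ℕ) (s : Stack) (c : ℕ) :
    (pushOp n (s, c)).1.length ≤ s.length + 1 := by
  cases c with
  | zero => simp [pushOp]
  | succ c =>
    simp only [pushOp]
    split <;> simp

theorem length_popOp_le (n : ℕ) (s : Stack) (c : ℕ) : (popOp n (s, c)).1.length ≤ s.length := by
  simp only [popOp]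
  split
  · cases c with
    | zero => simp
    | succ c => exact le_rfl
  · exact le_rfl

theorem sum_length_upd_le (A : Finset Reg) (φ : Store) (x : Reg) (s : Stack)
    (hs : s.length ≤ (φ x).length + 1) :
    ∑ y ∈ A, (upd φ x s y).length ≤ ∑ y ∈ A, (φ y).length + 1 :=
  calc ∑ y ∈ A, (upd φ x s y).length
      ≤ ∑ y ∈ A, ((φ y).length + if y = x then 1 else 0) := by
        refine Finset.sum_le_sum fun y _ => ?_
        by_cases hyx : y = x
        · subst hyx; simpa [upd] using hs
        · simp [upd, hyx]
    _ ≤ ∑ y ∈ A, (φ y).length + 1 := by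
        rw [Finset.sum_add_distrib, Finset.sum_ite_eq']
        split <;> simp

theorem Bodies.writes_of_get : ∀ {ps : Bodies} {i y : ℕ}, (ps.get i).Writes y → ps.Writes y
  | .single _, _, _, h => h
  | .cons _ _, 0, _, h => Or.inl h
  | .cons _ _, _ + 1, _, h => Or.inr (writes_of_get h)

theorem Bodies.leads_of_get : ∀ {ps : Bodies} {i y : ℕ}, (ps.get i).Leads y → ps.Leads y
  | .single _, _, _, h => h
  | .cons _ _, 0, _, h => Or.inl h
  | .cons _ _, _ + 1, _, h => Or.inr (leads_of_get h)

theorem Eval.exists_evalN {t : Term} {ω ω' : FState} (h : Eval t ω ω') :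
    ∃ k, EvalN k t ω ω' := by
  induction h using Eval.rec
    (motive_2 := fun s ps ω ω' _ => ∃ k, EvalListN k s ps ω ω') with
  | skip ω => exact ⟨1, .skip ω⟩
  | seq _ _ ih₁ ih₂ => obtain ⟨_, e₁⟩ := ih₁; obtain ⟨_, e₂⟩ := ih₂; exact ⟨_, .seq e₁ e₂⟩
  | push n x φ c => exact ⟨1, .push n x φ c⟩
  | pop n x φ c => exact ⟨1, .pop n x φ c⟩
  | ifeq_true hx _ ih => obtain ⟨_, e⟩ := ih; exact ⟨_, .ifeq_true hx e⟩
  | ifeq_false φ c hx => exact ⟨1, .ifeq_false φ c hx⟩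
  | normal _ ih => obtain ⟨_, e⟩ := ih; exact ⟨_, .normal e⟩
  | fort _ ih => obtain ⟨_, e⟩ := ih; exact ⟨_, .fort e⟩
  | roft _ ih => obtain ⟨_, e⟩ := ih; exact ⟨_, .roft e⟩
  | nil ps ω => exact ⟨1, .nil ps ω⟩
  | cons _ _ ih₁ ih₂ => obtain ⟨_, e₁⟩ := ih₁; obtain ⟨_, e₂⟩ := ih₂; exact ⟨_, .cons e₁ e₂⟩

mutual
theorem EvalN.apply_eq_of_not_writes : ∀ {k t ω ω'}, EvalN k t ω ω' →
    ∀ {y}, ¬ t.Writes y → ω'.1 y = ω.1 y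
  | _, _, _, _, .skip _, _, _ => rfl
  | _, _, _, _, .seq h₁ h₂, _, hw =>
      (h₂.apply_eq_of_not_writes fun w => hw (.inr w)).trans
        (h₁.apply_eq_of_not_writes fun w => hw (.inl w))
  | _, _, _, _, .push _ _ _ _, _, hw => if_neg fun e => hw e.symm
  | _, _, _, _, .pop _ _ _ _, _, hw => if_neg fun e => hw e.symm
  | _, _, _, _, .ifeq_true _ h, _, hw => h.apply_eq_of_not_writes hw
  | _, _, _, _, .ifeq_false _ _ _, _, _ => rfl
  | _, _, _, _, .normal h, _, hw => h.apply_eq_of_not_writes hw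
  | _, _, _, _, .fort h, _, hw => h.apply_eq_of_not_writes hw
  | _, _, _, _, .roft h, _, hw => h.apply_eq_of_not_writes hw
theorem EvalListN.apply_eq_of_not_writes : ∀ {k s ps ω ω'}, EvalListN k s ps ω ω' →
    ∀ {y}, ¬ ps.Writes y → ω'.1 y = ω.1 y
  | _, _, _, _, _, .nil _ _, _, _ => rfl
  | _, _, _, _, _, .cons h₁ h₂, _, hw =>
      (h₂.apply_eq_of_not_writes hw).trans
        (h₁.apply_eq_of_not_writes fun w => hw (Bodies.writes_of_get w))
end

mutual
theorem EvalN.sum_length_le : ∀ {k t ω ω'}, EvalN k t ω ω' → ∀ A : Finset Reg,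
    ∑ x ∈ A, (ω'.1 x).length ≤ ∑ x ∈ A, (ω.1 x).length + k
  | _, _, _, _, .skip _, _ => Nat.le_add_right _ _
  | _, _, _, _, .seq h₁ h₂, A => by
      have := h₁.sum_length_le A; have := h₂.sum_length_le A; omega
  | _, _, _, _, .push n x φ c, A => sum_length_upd_le A φ x _ (length_pushOp_le n (φ x) c)
  | _, _, _, _, .pop n x φ c, A =>
      sum_length_upd_le A φ x _ ((length_popOp_le n (φ x) c).trans (Nat.le_succ _))
  | _, _, _, _, .ifeq_true _ h, A => by have := h.sum_length_le A; omega
  | _, _, _, _, .ifeq_false _ _ _, _ => Nat.le_add_right _ _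
  | _, _, _, _, .normal h, A => by have := h.sum_length_le A; omega
  | _, _, _, _, .fort h, A => by have := h.sum_length_le A; omega
  | _, _, _, _, .roft h, A => by have := h.sum_length_le A; omega
theorem EvalListN.sum_length_le : ∀ {k s ps ω ω'}, EvalListN k s ps ω ω' → ∀ A : Finset Reg,
    ∑ x ∈ A, (ω'.1 x).length ≤ ∑ x ∈ A, (ω.1 x).length + k
  | _, _, _, _, _, .nil _ _, _ => Nat.le_add_right _ _
  | _, _, _, _, _, .cons h₁ h₂, A => by
      have := h₁.sum_length_le A; have := h₂.sum_length_le A; omega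
end

mutual
/-- A bound on derivation sizes, as a polynomial in a bound on the lengths of the registers
leading iterations. -/
noncomputable def Term.sizeBound : Term → ℕ[X]
  | .skip => 1
  | .push _ _ => 1
  | .pop _ _ => 1
  | .seq t u => t.sizeBound + u.sizeBound + 1
  | .ifeq _ _ t => t.sizeBound + 1
  | .normal _ t => t.sizeBound + 1
  | .fort _ ps => X * (ps.sizeBound + 1) + 2
  | .roft _ ps => X * (ps.sizeBound + 1) + 2
noncomputable def Bodies.sizeBound : Bodies → ℕ[X]
  | .single t => t.sizeBound
  | .cons t ps => t.sizeBound + ps.sizeBound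
end

theorem Bodies.eval_sizeBound_get_le (M : ℕ) :
    ∀ (ps : Bodies) (i : ℕ), (ps.get i).sizeBound.eval M ≤ ps.sizeBound.eval M
  | .single _, _ => le_rfl
  | .cons _ _, 0 => by simp [Bodies.get, Bodies.sizeBound]
  | .cons _ ps, i + 1 => by
      simpa [Bodies.get, Bodies.sizeBound] using (eval_sizeBound_get_le M ps i).trans le_add_self

mutual
/-- Iteration leaders are read-only, so their lengths stay below `M` along the whole derivation:
the number of iterations of each loop is at most `M`. -/
theorem EvalN.le_eval_sizeBound : ∀ {k t ω ω'}, EvalN k t ω ω' → ∀ {M : ℕ},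
    (∀ y, t.Leads y → ¬ t.Writes y ∧ (ω.1 y).length ≤ M) → k ≤ t.sizeBound.eval M
  | _, _, _, _, .skip _, _, _ => by simp [Term.sizeBound]
  | _, _, _, _, .seq h₁ h₂, M, hL => by
      have b₁ := h₁.le_eval_sizeBound fun y l =>
        ⟨fun w => (hL y (.inl l)).1 (.inl w), (hL y (.inl l)).2⟩
      have b₂ := h₂.le_eval_sizeBound (M := M) fun y l =>
        ⟨fun w => (hL y (.inr l)).1 (.inr w), by
          rw [h₁.apply_eq_of_not_writes fun w => (hL y (.inr l)).1 (.inl w)]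
          exact (hL y (.inr l)).2⟩
      simp only [Term.sizeBound, eval_add, eval_one]
      omega
  | _, _, _, _, .push _ _ _ _, _, _ => by simp [Term.sizeBound]
  | _, _, _, _, .pop _ _ _ _, _, _ => by simp [Term.sizeBound]
  | _, _, _, _, .ifeq_true _ h, _, hL => by
      simpa [Term.sizeBound] using h.le_eval_sizeBound hL
  | _, _, _, _, .ifeq_false _ _ _, _, _ => by simp [Term.sizeBound]
  | _, _, _, _, .normal h, _, hL => by
      simpa [Term.sizeBound] using h.le_eval_sizeBound hL
  | _, _, _, _, .fort (x := x) (ps := ps) h, M, hL => by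
      have b := h.le_eval_sizeBound fun y l => hL y (.inr l)
      have := Nat.mul_le_mul_right (ps.sizeBound.eval M + 1) (hL x (.inl rfl)).2
      simp only [Term.sizeBound, eval_add, eval_mul, eval_X, eval_one, eval_ofNat]
      omega
  | _, _, _, _, .roft (x := x) (ps := ps) h, M, hL => by
      have b := h.le_eval_sizeBound fun y l => hL y (.inr l)
      have := Nat.mul_le_mul_right (ps.sizeBound.eval M + 1) (hL x (.inl rfl)).2
      rw [List.length_reverse] at b
      simp only [Term.sizeBound, eval_add, eval_mul, eval_X, eval_one, eval_ofNat]
      omega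
theorem EvalListN.le_eval_sizeBound : ∀ {k s ps ω ω'}, EvalListN k s ps ω ω' → ∀ {M : ℕ},
    (∀ y, ps.Leads y → ¬ ps.Writes y ∧ (ω.1 y).length ≤ M) →
    k ≤ s.length * (ps.sizeBound.eval M + 1) + 1
  | _, _, _, _, _, .nil _ _, _, _ => by simp
  | _, _, _, _, _, .cons (i := i) (t := s) (ps := ps) h₁ h₂, M, hL => by
      have b₁ := (h₁.le_eval_sizeBound fun y l =>
        ⟨fun w => (hL y (Bodies.leads_of_get l)).1 (Bodies.writes_of_get w),
          (hL y (Bodies.leads_of_get l)).2⟩).trans (ps.eval_sizeBound_get_le M i)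
      have b₂ := h₂.le_eval_sizeBound (M := M) fun y l =>
        ⟨(hL y l).1, by rw [h₁.apply_eq_of_not_writes fun w => (hL y l).1
          (Bodies.writes_of_get w)]; exact (hL y l).2⟩
      rw [List.length_cons, add_one_mul]
      omega
end

theorem Term.exists_poly_bound_evalN : ∀ t : Term, t.Raw → t.WF →
    ∃ q : ℕ[X], ∀ ω ω' k, EvalN k t ω ω' → k ≤ q.eval (∑ x ∈ t.regs, (ω.1 x).length)
  | .skip, _, _ => ⟨1, fun _ _ _ h => by cases h; simp⟩
  | .push _ _, _, _ => ⟨1, fun _ _ _ h => by cases h; simp⟩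
  | .pop _ _, _, _ => ⟨1, fun _ _ _ h => by cases h; simp⟩
  | .seq t u, hR, hW => by
      obtain ⟨q₁, H₁⟩ := t.exists_poly_bound_evalN hR.1 hW.1
      obtain ⟨q₂, H₂⟩ := u.exists_poly_bound_evalN hR.2 hW.2
      refine ⟨q₁ + q₂.comp (X + q₁) + 1, fun ω ω' k h => ?_⟩
      obtain ⟨k₁, k₂, ω₁, h₁, h₂, rfl⟩ : ∃ k₁ k₂ ω₁, EvalN k₁ t ω ω₁ ∧ EvalN k₂ u ω₁ ω' ∧
          k = k₁ + k₂ + 1 := by cases h; exact ⟨_, _, _, ‹_›, ‹_›, rfl⟩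
      rw [Term.regs]
      set N := ∑ x ∈ t.regs ∪ u.regs, (ω.1 x).length
      have hk₁ : k₁ ≤ q₁.eval N := (H₁ _ _ _ h₁).trans
        (q₁.eval_mono_of_canonicallyOrdered (Finset.sum_le_sum_of_subset Finset.subset_union_left))
      have hN₁ : ∑ x ∈ u.regs, (ω₁.1 x).length ≤ N + q₁.eval N :=
        ((Finset.sum_le_sum_of_subset Finset.subset_union_right).trans
          (h₁.sum_length_le (t.regs ∪ u.regs))).trans (by omega)
      have hk₂ : k₂ ≤ q₂.eval (N + q₁.eval N) :=
        (H₂ _ _ _ h₂).trans (q₂.eval_mono_of_canonicallyOrdered hN₁)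
      simp only [eval_add, eval_comp, eval_X, eval_one]
      omega
  | .ifeq x n t, hR, hW => by
      obtain ⟨q, H⟩ := t.exists_poly_bound_evalN hR hW.1
      refine ⟨q + 1, fun ω ω' k h => ?_⟩
      cases h with
      | ifeq_true _ h =>
        have := (H _ _ _ h).trans (q.eval_mono_of_canonicallyOrdered
          (Finset.sum_le_sum_of_subset (Finset.subset_insert x t.regs)))
        simpa [Term.regs] using this
      | ifeq_false => simp
  | .normal xs t, _, hW => ⟨t.sizeBound + 1, fun ω ω' k h => by
      cases h with
      | normal h =>
        have hxs : ∀ y ∈ xs, (ω.1 y).length ≤ ∑ x ∈ Term.regs (.normal xs t), (ω.1 x).length :=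
          fun y hy => Finset.single_le_sum (f := fun x => (ω.1 x).length) (fun _ _ => Nat.zero_le _)
            (Finset.mem_union_left _ (List.mem_toFinset.2 hy))
        simpa using h.le_eval_sizeBound fun y l =>
          ⟨hW.2.1 y (hW.2.2 y l), hxs y (hW.2.2 y l)⟩⟩

end ForNo
open ForNo in
/-- Polynomial bound on ForNo computations: for every ForNo term
there is a polynomial bounding both the size of evaluation derivations and the
total length of the final stacks in terms of the total length of the initial
stacks of the registers occurring in the term. -/
theorem forno_polynomial_bound (T : Term) (hT : InForNo T) :
    ∃ q : Polynomial ℕ, ∀ ω ω' : FState, Eval T ω ω' →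
      (∀ k : ℕ, EvalN k T ω ω' →
        k ≤ q.eval (∑ x ∈ T.regs, (ω.1 x).length)) ∧
      (∑ x ∈ T.regs, (ω'.1 x).length ≤
        q.eval (∑ x ∈ T.regs, (ω.1 x).length)) := by
  obtain ⟨q, hq⟩ := T.exists_poly_bound_evalN hT.1 hT.2
  refine ⟨Polynomial.X + q, fun ω ω' hev => ⟨fun k hk => ?_, ?_⟩⟩
  · simpa using (hq ω ω' k hk).trans le_add_self
  · obtain ⟨k, hk⟩ := hev.exists_evalN
    simpa using (hk.sum_length_le T.regs).trans (Nat.add_le_add_left (hq ω ω' k hk) _)
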